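/- A measurable set E ⊆ ℝ is a 2π-translation generator of a partition of ℝ (i.e., the sets E + 2nπ, n ∈ ℤ, are disjoint with union conull in ℝ) if and only if, modulo a null set, E is translation congruent modulo 2π to [0,2π). -/

import Mathlib

open MeasureTheory Set Real

/-- `E` and `F` are translation congruent modulo `2π`. -/
def TranslationCongruent (E F : Set ℝ) : Prop :=
  ∃ φ : ℝ → ℝ, Measurable φ ∧ Set.BijOn φ E F ∧ ∀ s ∈ E, ∃ k : ℤ, φ s = s + 2 * π * k

/-! A set tiles `ℝ` exactly under `pℤ` iff reduction modulo `p` (`toIcoMod`) maps it bijectively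
onto `[0, p)`, and then `toIcoMod` itself is a measurable translation congruence. If `E` only
tiles almost everywhere, the set of points covered zero or several times is null and invariant
under `pℤ`, so replacing `E` on it by `[0, p)` yields an exact tile a.e. equal to `E`. Conversely,
a.e. tiling passes to a.e. equal sets because translations preserve Lebesgue measure. -/

theorem mem_image_add_right_iff {G : Type*} [AddGroup G] {a x : G} {S : Set G} :
    x ∈ (fun s => s + a) '' S ↔ x - a ∈ S := by
  simp [image_add_right, sub_eq_add_neg]

theorem image_add_right_ae_eq {G : Type*} [MeasurableSpace G] [AddGroup G] [MeasurableAdd G]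
    {μ : Measure G} [μ.IsAddRightInvariant] {a : G} {S T : Set G} (h : S =ᵐ[μ] T) :
    (fun s => s + a) '' S =ᵐ[μ] (fun s => s + a) '' T := by
  simp only [image_add_right]
  exact (measurePreserving_add_right μ (-a)).quasiMeasurePreserving.preimage_ae_eq h

theorem measurable_toIcoMod {p : ℝ} (hp : 0 < p) : Measurable (toIcoMod hp 0) := by
  simp_rw [funext (toIcoMod_eq_fract_mul hp)]
  exact (measurable_fract.comp (measurable_id.div_const p)).mul_const p

section Tiling

variable {p : ℝ} {E E' F G : Set ℝ}

def IsExactTile (p : ℝ) (F : Set ℝ) : Prop :=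
  ∀ x : ℝ, ∃! n : ℤ, x - p * n ∈ F

def IsAETile (p : ℝ) (E : Set ℝ) : Prop :=
  (∀ m n : ℤ, m ≠ n →
      AEDisjoint volume ((fun s => s + p * m) '' E) ((fun s => s + p * n) '' E)) ∧
    volume (⋃ n : ℤ, (fun s => s + p * n) '' E)ᶜ = 0

theorem existsUnique_sub_mul_mem_iff (F : Set ℝ) (x : ℝ) (k : ℤ) :
    (∃! n : ℤ, x - p * k - p * n ∈ F) ↔ ∃! n : ℤ, x - p * n ∈ F :=
  (Equiv.addLeft k).existsUnique_congr fun n => by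
    simp only [Equiv.coe_addLeft, Int.cast_add, mul_add, sub_sub]

theorem measurableSet_setOf_existsUnique (hE : MeasurableSet E) :
    MeasurableSet {x : ℝ | ∃! n : ℤ, x - p * n ∈ E} := by
  have hmem (n : ℤ) : Measurable fun x : ℝ => x - p * n ∈ E :=
    measurableSet_setOfPred.1 (measurable_id.sub_const _ hE)
  exact measurableSet_setOfPred.2 <|
    .exists fun n => (hmem n).and <| .forall fun m => (hmem m).imp measurable_const

theorem IsExactTile.bijOn_toIcoMod (hp : 0 < p) (hF : IsExactTile p F) :
    BijOn (toIcoMod hp 0) F (Ico 0 p) := by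
  refine ⟨fun s _ => toIcoMod_mem_Ico' hp s, fun s hs t ht hst => ?_, fun y hy => ?_⟩
  · obtain ⟨n, hn⟩ := (toIcoMod_eq_toIcoMod hp).1 hst
    rw [zsmul_eq_mul] at hn
    have hts : s - p * ↑(-n) = t := by push_cast; linarith
    have hn0 : -n = 0 := (hF s).unique (by rwa [hts]) (by simpa using hs)
    simpa [hn0] using hts
  · obtain ⟨n, hn, -⟩ := hF y
    refine ⟨_, hn, ?_⟩
    rw [mul_comm, ← zsmul_eq_mul, toIcoMod_sub_zsmul, toIcoMod_eq_self]
    simpa using hy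

theorem IsExactTile.of_bijOn_toIcoMod (hp : 0 < p) (h : BijOn (toIcoMod hp 0) F (Ico 0 p)) :
    IsExactTile p F := by
  intro x
  obtain ⟨s, hs, hsx⟩ := h.surjOn (toIcoMod_mem_Ico' hp x)
  obtain ⟨n, hn⟩ := (toIcoMod_eq_toIcoMod hp).1 hsx
  rw [zsmul_eq_mul] at hn
  have hxs : x - p * n = s := by linarith
  refine ⟨n, by simpa only [hxs] using hs, fun m hm => ?_⟩
  have hms : x - p * m = s := h.injOn hm hs <| by
    rw [hsx, mul_comm, ← zsmul_eq_mul, toIcoMod_sub_zsmul]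
  have : p * m = p * n := by linarith
  exact_mod_cast mul_left_cancel₀ hp.ne' this

theorem IsExactTile.isAETile (hF : IsExactTile p F) : IsAETile p F := by
  refine ⟨fun m n hmn => Disjoint.aedisjoint ?_, ?_⟩
  · refine disjoint_left.2 fun x hxm hxn => hmn ?_
    exact (hF x).unique (mem_image_add_right_iff.1 hxm) (mem_image_add_right_iff.1 hxn)
  · convert measure_empty (μ := volume)
    refine compl_empty_iff.2 (iUnion_eq_univ_iff.2 fun x => ?_)
    obtain ⟨n, hn, -⟩ := hF x
    exact ⟨n, mem_image_add_right_iff.2 hn⟩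

theorem IsAETile.ae_existsUnique (h : IsAETile p E) :
    ∀ᵐ x, ∃! n : ℤ, x - p * n ∈ E := by
  have hoverlap : ∀ᵐ x, ∀ m n : ℤ, x - p * m ∈ E → x - p * n ∈ E → m = n := by
    simp only [ae_all_iff]
    intro m n
    by_cases hmn : m = n
    · exact .of_forall fun _ _ _ => hmn
    filter_upwards [measure_eq_zero_iff_ae_notMem.1 (h.1 m n hmn)] with x hx hm hn
    exact absurd ⟨mem_image_add_right_iff.2 hm, mem_image_add_right_iff.2 hn⟩ hx
  have hcover : ∀ᵐ x, ∃ n : ℤ, x - p * n ∈ E := by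
    filter_upwards [measure_eq_zero_iff_ae_notMem.1 h.2] with x hx
    simpa [mem_image_add_right_iff, sub_eq_add_neg] using hx
  filter_upwards [hoverlap, hcover] with x hx ⟨n, hn⟩
  exact ⟨n, hn, fun m hm => hx m n hm hn⟩

theorem isExactTile_diff_union_inter (hG : IsExactTile p G) :
    IsExactTile p ((E \ {x | ∃! n : ℤ, x - p * n ∈ E}ᶜ) ∪
      (G ∩ {x | ∃! n : ℤ, x - p * n ∈ E}ᶜ)) := by
  intro x
  by_cases hx : ∃! m : ℤ, x - p * m ∈ E
  · refine (existsUnique_congr fun n => ?_).2 hx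
    simp [existsUnique_sub_mul_mem_iff, hx]
  · refine (existsUnique_congr fun n => ?_).2 (hG x)
    simp [existsUnique_sub_mul_mem_iff, hx]

theorem isExactTile_Ico (hp : 0 < p) : IsExactTile p (Ico 0 p) :=
  .of_bijOn_toIcoMod hp <| (bijOn_id _).congr fun y hy =>
    ((toIcoMod_eq_self hp).2 (by simpa using hy)).symm

theorem IsAETile.exists_isExactTile (hp : 0 < p) (hE : MeasurableSet E) (h : IsAETile p E) :
    ∃ E', MeasurableSet E' ∧ E =ᵐ[volume] E' ∧ IsExactTile p E' := by
  set B := {x | ∃! n : ℤ, x - p * n ∈ E}ᶜ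
  have hB : MeasurableSet B := (measurableSet_setOf_existsUnique hE).compl
  have hB0 : volume B = 0 :=
    measure_eq_zero_iff_ae_notMem.2 <| by simpa [B] using h.ae_existsUnique
  refine ⟨(E \ B) ∪ (Ico 0 p ∩ B), (hE.diff hB).union (measurableSet_Ico.inter hB),
    ae_eq_set.2 ⟨measure_mono_null ?_ hB0, measure_mono_null ?_ hB0⟩,
    isExactTile_diff_union_inter (isExactTile_Ico hp)⟩
  · intro x hx
    by_contra hxB
    exact hx.2 (Or.inl ⟨hx.1, hxB⟩)
  · rintro x ⟨⟨hxE, -⟩ | ⟨-, hxB⟩, hxE'⟩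
    · exact absurd hxE hxE'
    · exact hxB

theorem IsAETile.congr (h : IsAETile p E) (hEE' : E =ᵐ[volume] E') : IsAETile p E' :=
  ⟨fun m n hmn => (h.1 m n hmn).congr (image_add_right_ae_eq hEE'.symm)
      (image_add_right_ae_eq hEE'.symm),
    by rw [← h.2, measure_congr
      ((Filter.EventuallyEq.countable_iUnion fun n => image_add_right_ae_eq hEE').compl)]⟩

theorem translationCongruent_Ico_iff :
    TranslationCongruent F (Ico 0 (2 * π)) ↔ IsExactTile (2 * π) F := by
  constructor
  · rintro ⟨φ, -, hφ, hk⟩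
    refine .of_bijOn_toIcoMod two_pi_pos (hφ.congr fun s hs => ?_)
    obtain ⟨k, hks⟩ := hk s hs
    refine ((toIcoMod_eq_iff two_pi_pos).2 ⟨by simpa using hφ.mapsTo hs, -k, ?_⟩).symm
    rw [hks, neg_zsmul, zsmul_eq_mul]; ring
  · intro hF
    refine ⟨_, measurable_toIcoMod two_pi_pos, hF.bijOn_toIcoMod two_pi_pos, fun s _ => ?_⟩
    exact ⟨-toIcoDiv two_pi_pos 0 s, by rw [toIcoMod]; push_cast; ring⟩

end Tiling

theorem stmt_11 (E : Set ℝ) (hE : MeasurableSet E) :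
    ((∀ m n : ℤ, m ≠ n →
        AEDisjoint volume ((fun s => s + 2 * π * m) '' E) ((fun s => s + 2 * π * n) '' E)) ∧
      volume (⋃ n : ℤ, (fun s => s + 2 * π * n) '' E)ᶜ = 0) ↔
    (∃ E' : Set ℝ, MeasurableSet E' ∧ volume (symmDiff E E') = 0 ∧
      TranslationCongruent E' (Set.Ico 0 (2 * π))) := by
  simp_rw [translationCongruent_Ico_iff, measure_symmDiff_eq_zero_iff]
  constructor
  · exact IsAETile.exists_isExactTile two_pi_pos hE
  · rintro ⟨E', -, hEE', hE'⟩
    exact hE'.isAETile.congr hEE'.symm
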